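/- Let (A, ∘) be a pre-Lie superalgebra over a field of characteristic zero and let R : A → A be a Rota-Baxter operator of weight zero on (A, ∘). Then the products x ▷ y := R(x)∘y and x ◁ y := −(−1)^{|x||y|} y∘R(x), defined for homogeneous x, y ∈ A, make (A, ▷, ◁) an L-dendriform superalgebra. -/

import Mathlib

/-- The super sign `(−1)^{|x||y|}` for parities `i`, `j`. -/
def sgn (K : Type*) [Field K] (i j : ZMod 2) : K := (-1 : K) ^ (i.val * j.val)

/-- The product `x ▷ y := R(x)∘y`. -/
def rtOp {K A : Type*} [Field K] [AddCommGroup A] [Module K A]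
    (circ : A →ₗ[K] A →ₗ[K] A) (R : A →ₗ[K] A) (x y : A) : A := circ (R x) y

/-- The product `x ◁ y := −(−1)^{|x||y|} y∘R(x)` on homogeneous elements of
parities `i`, `j`. -/
def ltOp {K A : Type*} [Field K] [AddCommGroup A] [Module K A]
    (circ : A →ₗ[K] A →ₗ[K] A) (R : A →ₗ[K] A) (i j : ZMod 2) (x y : A) : A :=
  -(sgn K i j • circ y (R x))

/-!
Both L-dendriform identities are the pre-Lie identity at `R x, R y, z` (resp. `R x, z, R y`) in
disguise: on the right-hand sides the terms pair up into `R(R(x)∘y + x∘R(y))`, which the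
Rota–Baxter identity turns into `R(x)∘R(y)`, and the remaining signs cancel because
`(−1)^{|x||y|}` is bimultiplicative and squares to `1`.
-/

section Sign

variable (K : Type*) [Field K]

lemma sgn_comm (i j : ZMod 2) : sgn K j i = sgn K i j := by
  simp only [sgn, Nat.mul_comm]

lemma sgn_mul_self (i j : ZMod 2) : sgn K i j * sgn K i j = 1 := by
  rw [sgn, ← pow_add, ← two_mul, pow_mul, neg_one_sq, one_pow]

lemma sgn_add_left (i j k : ZMod 2) : sgn K (i + j) k = sgn K i k * sgn K j k := by
  rw [sgn, sgn, sgn, ← pow_add, ← add_mul, ZMod.val_add, neg_one_pow_eq_pow_mod_two,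
    Nat.mod_mul_mod, ← neg_one_pow_eq_pow_mod_two]

lemma sgn_add_right (i j k : ZMod 2) : sgn K i (j + k) = sgn K i j * sgn K i k := by
  rw [sgn_comm, sgn_add_left, sgn_comm K j, sgn_comm K k]

end Sign

section LDendriform

variable {K A : Type*} [Field K] [AddCommGroup A] [Module K A]
  (circ : A →ₗ[K] A →ₗ[K] A) (R : A →ₗ[K] A)

lemma rtOp_mem {𝒜 : ZMod 2 → Submodule K A}
    (hcirc : ∀ (i j : ZMod 2), ∀ x ∈ 𝒜 i, ∀ y ∈ 𝒜 j, circ x y ∈ 𝒜 (i + j))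
    (hR : ∀ (i : ZMod 2), ∀ x ∈ 𝒜 i, R x ∈ 𝒜 i)
    {i j : ZMod 2} {x y : A} (hx : x ∈ 𝒜 i) (hy : y ∈ 𝒜 j) : rtOp circ R x y ∈ 𝒜 (i + j) :=
  hcirc i j (R x) (hR i x hx) y hy

lemma ltOp_mem {𝒜 : ZMod 2 → Submodule K A}
    (hcirc : ∀ (i j : ZMod 2), ∀ x ∈ 𝒜 i, ∀ y ∈ 𝒜 j, circ x y ∈ 𝒜 (i + j))
    (hR : ∀ (i : ZMod 2), ∀ x ∈ 𝒜 i, R x ∈ 𝒜 i)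
    {i j : ZMod 2} {x y : A} (hx : x ∈ 𝒜 i) (hy : y ∈ 𝒜 j) : ltOp circ R i j x y ∈ 𝒜 (i + j) := by
  refine neg_mem (Submodule.smul_mem _ _ ?_)
  rw [add_comm]
  exact hcirc j i y hy (R x) (hR i x hx)

lemma rtOp_rtOp_eq {i j : ZMod 2} {x y z : A}
    (hassoc : circ (circ (R x) (R y)) z - circ (R x) (circ (R y) z)
      = sgn K i j • (circ (circ (R y) (R x)) z - circ (R y) (circ (R x) z)))
    (hxy : circ (R x) (R y) = R (circ (R x) y + circ x (R y)))
    (hyx : circ (R y) (R x) = R (circ (R y) x + circ y (R x))) :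
    rtOp circ R x (rtOp circ R y z)
      = rtOp circ R (rtOp circ R x y) z + rtOp circ R (ltOp circ R i j x y) z
        + sgn K i j • rtOp circ R y (rtOp circ R x z)
        - sgn K i j • rtOp circ R (ltOp circ R j i y x) z
        - sgn K i j • rtOp circ R (rtOp circ R y x) z := by
  rw [hxy, hyx] at hassoc
  simp only [map_add, LinearMap.add_apply] at hassoc
  simp only [rtOp, ltOp, sgn_comm K i j, map_neg, map_smul, LinearMap.neg_apply,
    LinearMap.smul_apply, smul_neg, smul_smul, sgn_mul_self, one_smul]
  linear_combination (norm := module) -hassoc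

lemma rtOp_ltOp_eq {i j k : ZMod 2} {x y z : A}
    (hassoc : circ (circ (R x) z) (R y) - circ (R x) (circ z (R y))
      = sgn K i k • (circ (circ z (R x)) (R y) - circ z (circ (R x) (R y))))
    (hxy : circ (R x) (R y) = R (circ (R x) y + circ x (R y))) :
    rtOp circ R x (ltOp circ R j k y z)
      = ltOp circ R (i + j) k (rtOp circ R x y) z
        + sgn K i j • ltOp circ R j (i + k) y (rtOp circ R x z)
        + sgn K i j • ltOp circ R j (i + k) y (ltOp circ R i k x z)
        - sgn K i j • ltOp circ R (j + i) k (ltOp circ R j i y x) z := by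
  rw [hxy] at hassoc
  simp only [map_add] at hassoc
  simp only [rtOp, ltOp, map_neg, map_smul, LinearMap.neg_apply, LinearMap.smul_apply]
  simp only [sgn_add_left, sgn_add_right, sgn_comm K i j, smul_neg, neg_neg, smul_smul]
  -- the last three terms of the goal carry a factor `sgn K i j ^ 2`, which `module` cannot cancel
  linear_combination (norm := module) (sgn K j k) • hassoc
    + (sgn_mul_self K i j) • (sgn K j k • circ (circ (R x) z) (R y)
      - (sgn K j k * sgn K i k) • circ (circ z (R x)) (R y)
      + (sgn K j k * sgn K i k) • circ z (R (circ x (R y))))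

end LDendriform

theorem stmt18_general {K A : Type*} [Field K] [AddCommGroup A] [Module K A]
    (𝒜 : ZMod 2 → Submodule K A)
    (circ : A →ₗ[K] A →ₗ[K] A)
    (hcirc_even : ∀ (i j : ZMod 2), ∀ x ∈ 𝒜 i, ∀ y ∈ 𝒜 j, circ x y ∈ 𝒜 (i + j))
    (hpre : ∀ (i j k : ZMod 2), ∀ x ∈ 𝒜 i, ∀ y ∈ 𝒜 j, ∀ z ∈ 𝒜 k,
      circ (circ x y) z - circ x (circ y z)
        = sgn K i j • (circ (circ y x) z - circ y (circ x z)))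
    (R : A →ₗ[K] A) (hR : ∀ (i : ZMod 2), ∀ x ∈ 𝒜 i, R x ∈ 𝒜 i)
    (hRB : ∀ (i j : ZMod 2), ∀ x ∈ 𝒜 i, ∀ y ∈ 𝒜 j,
      circ (R x) (R y) = R (circ (R x) y + circ x (R y))) :
    -- ▷ and ◁ are even
    (∀ (i j : ZMod 2), ∀ x ∈ 𝒜 i, ∀ y ∈ 𝒜 j, rtOp circ R x y ∈ 𝒜 (i + j)) ∧
    (∀ (i j : ZMod 2), ∀ x ∈ 𝒜 i, ∀ y ∈ 𝒜 j, ltOp circ R i j x y ∈ 𝒜 (i + j)) ∧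
    -- first L-dendriform super-identity
    (∀ (i j k : ZMod 2), ∀ x ∈ 𝒜 i, ∀ y ∈ 𝒜 j, ∀ z ∈ 𝒜 k,
      rtOp circ R x (rtOp circ R y z)
        = rtOp circ R (rtOp circ R x y) z + rtOp circ R (ltOp circ R i j x y) z
          + sgn K i j • rtOp circ R y (rtOp circ R x z)
          - sgn K i j • rtOp circ R (ltOp circ R j i y x) z
          - sgn K i j • rtOp circ R (rtOp circ R y x) z) ∧
    -- second L-dendriform super-identity
    (∀ (i j k : ZMod 2), ∀ x ∈ 𝒜 i, ∀ y ∈ 𝒜 j, ∀ z ∈ 𝒜 k,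
      rtOp circ R x (ltOp circ R j k y z)
        = ltOp circ R (i + j) k (rtOp circ R x y) z
          + sgn K i j • ltOp circ R j (i + k) y (rtOp circ R x z)
          + sgn K i j • ltOp circ R j (i + k) y (ltOp circ R i k x z)
          - sgn K i j • ltOp circ R (j + i) k (ltOp circ R j i y x) z) := by
  refine ⟨fun i j x hx y hy => rtOp_mem circ R hcirc_even hR hx hy,
    fun i j x hx y hy => ltOp_mem circ R hcirc_even hR hx hy, ?_, ?_⟩
  · intro i j k x hx y hy z hz
    exact rtOp_rtOp_eq circ R (hpre i j k _ (hR i x hx) _ (hR j y hy) z hz)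
      (hRB i j x hx y hy) (hRB j i y hy x hx)
  · intro i j k x hx y hy z hz
    exact rtOp_ltOp_eq circ R (hpre i k j _ (hR i x hx) z hz _ (hR j y hy)) (hRB i j x hx y hy)

/-- if `R` is a Rota-Baxter operator of weight zero on a pre-Lie
superalgebra `(A,∘)`, then `x ▷ y := R(x)∘y` and `x ◁ y := −(−1)^{|x||y|} y∘R(x)` make
`(A,▷,◁)` an L-dendriform superalgebra. -/
theorem stmt18 {K A : Type*} [Field K] [CharZero K] [AddCommGroup A] [Module K A]
    (𝒜 : ZMod 2 → Submodule K A) (hgr : DirectSum.IsInternal 𝒜)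
    (circ : A →ₗ[K] A →ₗ[K] A)
    (hcirc_even : ∀ (i j : ZMod 2), ∀ x ∈ 𝒜 i, ∀ y ∈ 𝒜 j, circ x y ∈ 𝒜 (i + j))
    (hpre : ∀ (i j k : ZMod 2), ∀ x ∈ 𝒜 i, ∀ y ∈ 𝒜 j, ∀ z ∈ 𝒜 k,
      circ (circ x y) z - circ x (circ y z)
        = sgn K i j • (circ (circ y x) z - circ y (circ x z)))
    (R : A →ₗ[K] A) (hR : ∀ (i : ZMod 2), ∀ x ∈ 𝒜 i, R x ∈ 𝒜 i)
    (hRB : ∀ (i j : ZMod 2), ∀ x ∈ 𝒜 i, ∀ y ∈ 𝒜 j,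
      circ (R x) (R y) = R (circ (R x) y + circ x (R y))) :
    -- ▷ and ◁ are even
    (∀ (i j : ZMod 2), ∀ x ∈ 𝒜 i, ∀ y ∈ 𝒜 j, rtOp circ R x y ∈ 𝒜 (i + j)) ∧
    (∀ (i j : ZMod 2), ∀ x ∈ 𝒜 i, ∀ y ∈ 𝒜 j, ltOp circ R i j x y ∈ 𝒜 (i + j)) ∧
    -- first L-dendriform super-identity
    (∀ (i j k : ZMod 2), ∀ x ∈ 𝒜 i, ∀ y ∈ 𝒜 j, ∀ z ∈ 𝒜 k,
      rtOp circ R x (rtOp circ R y z)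
        = rtOp circ R (rtOp circ R x y) z + rtOp circ R (ltOp circ R i j x y) z
          + sgn K i j • rtOp circ R y (rtOp circ R x z)
          - sgn K i j • rtOp circ R (ltOp circ R j i y x) z
          - sgn K i j • rtOp circ R (rtOp circ R y x) z) ∧
    -- second L-dendriform super-identity
    (∀ (i j k : ZMod 2), ∀ x ∈ 𝒜 i, ∀ y ∈ 𝒜 j, ∀ z ∈ 𝒜 k,
      rtOp circ R x (ltOp circ R j k y z)
        = ltOp circ R (i + j) k (rtOp circ R x y) z
          + sgn K i j • ltOp circ R j (i + k) y (rtOp circ R x z)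
          + sgn K i j • ltOp circ R j (i + k) y (ltOp circ R i k x z)
          - sgn K i j • ltOp circ R (j + i) k (ltOp circ R j i y x) z) :=
  stmt18_general 𝒜 circ hcirc_even hpre R hR hRB
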